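/- arXiv:1406.3597 — 3 statements merged into one kernel-verified Lean document; each statement's English description precedes it below -/
import Mathlib

section
/- For a positive integer n ≥ 2, let x = (n − H_n)/(H_n − 1) and α(l) = (n + x)·H_l − l·H_n. Then for every integer l with 1 ≤ l ≤ n, α(l) ≥ n + x − H_n. -/
open MeasureTheory Finset Filter

noncomputable def harmonicR (n : ℕ) : ℝ := ∑ i ∈ Finset.range n, (1 : ℝ) / (i + 1)

noncomputable def Hext (k : ℝ) : ℝ := ∫ x in (0:ℝ)..1, (1 - x ^ k) / (1 - x)

/-!
The inequality `α l ≥ α 1 = n + x - H_n` rearranges to `(l - 1)(H_n - 1) ≤ (n - 1)(H_l - 1)`,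
i.e. the chord slope `(H_l - H_1)/(l - 1)` decreases in `l`. This is the discrete concavity of
`H`, whose increments `1/(k + 1)` decrease.
-/

section AntitoneIncrement

variable {f : ℕ → ℝ}

theorem sub_mul_increment_le_sub (hf : Antitone fun k => f (k + 1) - f k) {a l m : ℕ}
    (hal : a ≤ l) (hlm : l ≤ m) :
    ((l : ℝ) - a) * (f (m + 1) - f m) ≤ f l - f a := by
  induction l, hal using Nat.le_induction with
  | base => simp
  | succ l hal ih =>
    have hstep : f (m + 1) - f m ≤ f (l + 1) - f l := hf (by omega)
    push_cast
    linarith [ih (by omega)]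

theorem sub_mul_sub_le_sub_mul_sub (hf : Antitone fun k => f (k + 1) - f k) {a l n : ℕ}
    (hal : a ≤ l) (hln : l ≤ n) :
    ((l : ℝ) - a) * (f n - f a) ≤ ((n : ℝ) - a) * (f l - f a) := by
  induction n, hln using Nat.le_induction with
  | base => exact le_rfl
  | succ m hlm ih =>
    push_cast
    linear_combination ih + sub_mul_increment_le_sub hf hal hlm

end AntitoneIncrement

theorem harmonicR_succ (m : ℕ) : harmonicR (m + 1) = harmonicR m + 1 / (m + 1) := by
  simp [harmonicR, Finset.sum_range_succ]

theorem harmonicR_one : harmonicR 1 = 1 := by simp [harmonicR]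

theorem antitone_harmonicR_increment : Antitone fun k => harmonicR (k + 1) - harmonicR k := by
  refine antitone_nat_of_succ_le fun k => ?_
  simp only [harmonicR_succ, add_sub_cancel_left]
  push_cast
  gcongr
  linarith

theorem monotone_harmonicR : Monotone harmonicR :=
  monotone_nat_of_le_succ fun k => by
    rw [harmonicR_succ, le_add_iff_nonneg_right]; positivity

theorem one_lt_harmonicR {n : ℕ} (hn : 2 ≤ n) : 1 < harmonicR n := by
  have h2 : harmonicR 2 = 3 / 2 := by
    rw [harmonicR_succ, harmonicR_one]; norm_num
  linarith [monotone_harmonicR hn]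

theorem stmt4 (n : ℕ) (hn : 2 ≤ n)
    (x : ℝ) (hx : x = ((n : ℝ) - harmonicR n) / (harmonicR n - 1))
    (α : ℕ → ℝ) (hα : ∀ m, α m = ((n : ℝ) + x) * harmonicR m - (m : ℝ) * harmonicR n) :
    ∀ l : ℕ, 1 ≤ l → l ≤ n → (n : ℝ) + x - harmonicR n ≤ α l := by
  intro l hl hln
  set H := harmonicR n
  have hH : 0 < H - 1 := sub_pos.mpr (one_lt_harmonicR hn)
  have hnx : (n : ℝ) + x = ((n : ℝ) - 1) * H / (H - 1) := by
    rw [hx]; field_simp; ring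
  have hchord : ((l : ℝ) - 1) * (H - 1) ≤ ((n : ℝ) - 1) * (harmonicR l - 1) := by
    simpa [harmonicR_one] using sub_mul_sub_le_sub_mul_sub antitone_harmonicR_increment hl hln
  suffices ((l : ℝ) - 1) * H ≤ ((n : ℝ) + x) * (harmonicR l - 1) by rw [hα]; linarith
  rw [hnx, div_mul_eq_mul_div, le_div_iff₀ hH]
  linarith [mul_le_mul_of_nonneg_left hchord (by linarith : (0 : ℝ) ≤ H)]
end

section
/- For every positive integer n and every integer 1 ≤ l ≤ n, l·H_{n−l} + (n−l)·H_l ≤ n·H(n/2), where H is the extended harmonic function H(k) = ∫₀¹ (1 − x^k)/(1 − x) dx. -/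
open MeasureTheory Finset Filter

/-!
Writing `H(k) = ∫₀¹ (1 - x^k)/(1 - x) dx`, the inequality holds for all real `a, b ≥ 0` in the form
`a H(b) + b H(a) ≤ (a + b) H((a + b)/2)`, and already pointwise for the integrands:
for `0 < x < 1`, weighted AM-GM with weights `a/(a+b), b/(a+b)` gives
`a x^b + b x^a ≥ (a + b) x^(2ab/(a+b)) ≥ (a + b) x^((a+b)/2)`,
the last step because `2ab/(a+b) ≤ (a+b)/2` and `x ≤ 1`.
-/

lemma one_sub_rpow_le_mul_one_sub {x c : ℝ} (hx₀ : 0 ≤ x) (hx₁ : x ≤ 1) (hc : 0 ≤ c) :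
    1 - x ^ c ≤ max 1 c * (1 - x) := by
  have hmono : x ^ max 1 c ≤ x ^ c := Real.rpow_le_rpow_of_exponent_ge' hx₀ hx₁ hc (le_max_right 1 c)
  have hbernoulli : 1 + max 1 c * (x - 1) ≤ x ^ max 1 c := by
    simpa using one_add_mul_self_le_rpow_one_add (s := x - 1) (by linarith) (le_max_left 1 c)
  linarith

lemma intervalIntegrable_one_sub_rpow_div_one_sub {c : ℝ} (hc : 0 ≤ c) :
    IntervalIntegrable (fun x : ℝ => (1 - x ^ c) / (1 - x)) volume 0 1 := by
  rw [intervalIntegrable_iff, Set.uIoc_of_le zero_le_one]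
  refine Measure.integrableOn_of_bounded (M := max 1 c) (by simp) ?_ ?_
  · exact ((continuous_const.sub (Real.continuous_rpow_const hc)).measurable.div
      (continuous_const.sub continuous_id).measurable).aestronglyMeasurable
  · filter_upwards [ae_restrict_mem measurableSet_Ioc] with x ⟨hx₀, hx₁⟩
    rcases hx₁.eq_or_lt with rfl | hx₁
    · simp
    · have hpos : 0 < 1 - x := by linarith
      rw [Real.norm_eq_abs, abs_div, abs_of_pos hpos, div_le_iff₀ hpos, abs_le]
      have := Real.rpow_le_one hx₀.le hx₁.le hc
      constructor <;> nlinarith [one_sub_rpow_le_mul_one_sub hx₀.le hx₁.le hc, le_max_left 1 c]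

lemma harmonicR_eq_Hext (m : ℕ) : harmonicR m = Hext m := by
  have hgeom : Hext m = ∫ x in (0:ℝ)..1, ∑ i ∈ range m, x ^ i := by
    refine intervalIntegral.integral_congr_Ioo_of_le zero_le_one fun x hx => ?_
    rw [Real.rpow_natCast, geom_sum_eq hx.2.ne, ← neg_div_neg_eq, neg_sub, neg_sub]
  rw [hgeom, intervalIntegral.integral_finsetSum fun i _ => (continuous_pow i).intervalIntegrable 0 1]
  simp [harmonicR, integral_pow]

lemma rpow_half_add_le {x a b : ℝ} (hx₀ : 0 < x) (hx₁ : x ≤ 1) (ha : 0 ≤ a) (hb : 0 ≤ b) :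
    (a + b) * x ^ ((a + b) / 2) ≤ a * x ^ b + b * x ^ a := by
  rcases (add_nonneg ha hb).eq_or_lt with hab | hab
  · rw [← hab, zero_mul]
    positivity
  have hexp : 2 * a * b / (a + b) ≤ (a + b) / 2 := by
    rw [div_le_div_iff₀ hab two_pos]
    nlinarith [sq_nonneg (a - b)]
  have hamgm : (x ^ b) ^ (a / (a + b)) * (x ^ a) ^ (b / (a + b))
      ≤ a / (a + b) * x ^ b + b / (a + b) * x ^ a :=
    Real.geom_mean_le_arith_mean2_weighted (by positivity) (by positivity) (by positivity)
      (by positivity) (by field_simp)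
  have hprod : (x ^ b) ^ (a / (a + b)) * (x ^ a) ^ (b / (a + b)) = x ^ (2 * a * b / (a + b)) := by
    rw [← Real.rpow_mul hx₀.le, ← Real.rpow_mul hx₀.le, ← Real.rpow_add hx₀]
    ring_nf
  have hmono := Real.rpow_le_rpow_of_exponent_ge hx₀ hx₁ hexp
  calc (a + b) * x ^ ((a + b) / 2)
      ≤ (a + b) * (a / (a + b) * x ^ b + b / (a + b) * x ^ a) := by
        gcongr
        linarith
    _ = a * x ^ b + b * x ^ a := by field_simp

lemma mul_Hext_add_mul_Hext_le {a b : ℝ} (ha : 0 ≤ a) (hb : 0 ≤ b) :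
    a * Hext b + b * Hext a ≤ (a + b) * Hext ((a + b) / 2) := by
  have hint := fun {c : ℝ} (hc : 0 ≤ c) => intervalIntegrable_one_sub_rpow_div_one_sub hc
  simp only [Hext]
  rw [← intervalIntegral.integral_const_mul, ← intervalIntegral.integral_const_mul,
    ← intervalIntegral.integral_const_mul,
    ← intervalIntegral.integral_add ((hint hb).const_mul a) ((hint ha).const_mul b)]
  refine intervalIntegral.integral_mono_on_of_le_Ioo zero_le_one
    (((hint hb).const_mul a).add ((hint ha).const_mul b)) ((hint (by positivity)).const_mul _)
    fun x ⟨hx₀, hx₁⟩ => ?_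
  have hpos : 0 < 1 - x := by linarith
  rw [← mul_div_assoc, ← mul_div_assoc, ← mul_div_assoc, ← add_div]
  gcongr
  linarith [rpow_half_add_le hx₀ hx₁.le ha hb]

theorem stmt8_general (n : ℕ) (l : ℕ) (hln : l ≤ n) :
    (l : ℝ) * harmonicR (n - l) + ((n : ℝ) - (l : ℝ)) * harmonicR l ≤ (n : ℝ) * Hext ((n : ℝ) / 2) := by
  have hsub : ((n - l : ℕ) : ℝ) = (n : ℝ) - l := Nat.cast_sub hln
  have key := mul_Hext_add_mul_Hext_le (Nat.cast_nonneg l) (Nat.cast_nonneg (n - l))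
  rw [hsub, add_sub_cancel] at key
  rwa [harmonicR_eq_Hext, harmonicR_eq_Hext, hsub]

theorem stmt8 (n : ℕ) (hn : 0 < n) (l : ℕ) (hl : 1 ≤ l) (hln : l ≤ n) :
    (l : ℝ) * harmonicR (n - l) + ((n : ℝ) - (l : ℝ)) * harmonicR l ≤ (n : ℝ) * Hext ((n : ℝ) / 2) :=
  stmt8_general n l hln
end

section
/- For a positive integer n ≥ 2 and x ≥ 0, and for every integer 1 ≤ l ≤ n, β(l) = l·H_{n−l} + ((n+x) − l)·H_l satisfies β(l) ≤ (n+x)·H((n+x)/2), where H is the increasing extension of harmonic numbers to the reals. -/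
open MeasureTheory Finset Filter

/-! The integrand `(1 - y ^ k) / (1 - y)` is bounded on `(0, 1]` for `k ≥ 0` (Bernoulli for
`k ≥ 1`), so `Hext k` is a genuine integral and inequalities between values of `Hext` can be
proved pointwise under the integral sign: for fixed `y ∈ (0, 1)`, `k ↦ (1 - y ^ k) / (1 - y)` is increasing and
concave, because `k ↦ y ^ k` is decreasing and convex. Hence `Hext` is increasing and concave on
`[0, ∞)`. Writing `s = n + x`, the left-hand side is `s` times the mean of `Hext (n - l)` and
`Hext l` with weights `l / s` and `(s - l) / s`; Jensen bounds it by `s * Hext` of the mean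
exponent `l (n + s - 2l) / s ≤ 2 l (s - l) / s ≤ s / 2`. -/

lemma norm_Hext_integrand_le {k : ℝ} (hk : 0 ≤ k) {y : ℝ} (hy : y ∈ Set.Ioc (0:ℝ) 1) :
    ‖(1 - y ^ k) / (1 - y)‖ ≤ max 1 k := by
  obtain ⟨hy0, hy1⟩ := hy
  rcases eq_or_lt_of_le hy1 with rfl | hy1
  · simp
  have h1y : 0 < 1 - y := by linarith
  have hyk : y ^ k ≤ 1 := Real.rpow_le_one hy0.le hy1.le hk
  rw [Real.norm_eq_abs, abs_of_nonneg (div_nonneg (by linarith) h1y.le)]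
  rcases le_total k 1 with hk1 | hk1
  · refine le_trans ?_ (le_max_left 1 k)
    rw [div_le_one h1y]
    have : y ^ (1:ℝ) ≤ y ^ k := Real.rpow_le_rpow_of_exponent_ge hy0 hy1.le hk1
    rw [Real.rpow_one] at this
    linarith
  · refine le_trans ?_ (le_max_right 1 k)
    rw [div_le_iff₀ h1y]
    have bernoulli := one_add_mul_self_le_rpow_one_add (by linarith : -1 ≤ y - 1) hk1
    rw [add_sub_cancel] at bernoulli
    linarith

lemma intervalIntegrable_Hext_integrand {k : ℝ} (hk : 0 ≤ k) :
    IntervalIntegrable (fun y => (1 - y ^ k) / (1 - y)) volume 0 1 := by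
  rw [intervalIntegrable_iff, Set.uIoc_of_le zero_le_one]
  apply Measure.integrableOn_of_bounded (M := max 1 k) measure_Ioc_lt_top.ne
  · exact ((measurable_const.sub (measurable_id.pow_const k)).div
      (measurable_const.sub measurable_id)).aestronglyMeasurable
  · rw [ae_restrict_iff' measurableSet_Ioc]
    filter_upwards with y hy using norm_Hext_integrand_le hk hy

lemma Hext_natCast (m : ℕ) : Hext m = harmonicR m := by
  have geom : (∫ y in (0:ℝ)..1, (1 - y ^ (m:ℝ)) / (1 - y)) =
      ∫ y in (0:ℝ)..1, ∑ i ∈ range m, y ^ i := by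
    refine intervalIntegral.integral_congr_ae ?_
    have ae_ne_one : ∀ᵐ y : ℝ, y ≠ 1 := by simp [ae_iff, measure_singleton]
    filter_upwards [ae_ne_one] with y hy1 _
    rw [Real.rpow_natCast, geom_sum_eq hy1, ← neg_div_neg_eq, neg_sub, neg_sub]
  rw [Hext, harmonicR, geom, intervalIntegral.integral_finsetSum
    fun i _ => (continuous_pow i).intervalIntegrable 0 1]
  refine sum_congr rfl fun i _ => ?_
  simp [integral_pow]

lemma monotoneOn_Hext : MonotoneOn Hext (Set.Ici 0) := by
  intro u hu v hv huv
  refine intervalIntegral.integral_mono_on_of_le_Ioo zero_le_one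
    (intervalIntegrable_Hext_integrand hu) (intervalIntegrable_Hext_integrand hv) ?_
  rintro y ⟨hy0, hy1⟩
  have hpow : y ^ v ≤ y ^ u := Real.rpow_le_rpow_of_exponent_ge hy0 hy1.le huv
  exact div_le_div_of_nonneg_right (by linarith) (by linarith)

lemma concaveOn_Hext : ConcaveOn ℝ (Set.Ici 0) Hext := by
  refine ⟨convex_Ici 0, fun u hu v hv a b ha hb hab => ?_⟩
  have hmean : 0 ≤ a • u + b • v := (convex_Ici 0) hu hv ha hb hab
  have Iu := intervalIntegrable_Hext_integrand hu
  have Iv := intervalIntegrable_Hext_integrand hv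
  simp only [Hext, smul_eq_mul]
  rw [← intervalIntegral.integral_const_mul, ← intervalIntegral.integral_const_mul,
    ← intervalIntegral.integral_add (Iu.const_mul a) (Iv.const_mul b)]
  refine intervalIntegral.integral_mono_on_of_le_Ioo zero_le_one
    ((Iu.const_mul a).add (Iv.const_mul b)) (intervalIntegrable_Hext_integrand hmean) ?_
  rintro y ⟨hy0, hy1⟩
  have h1y : 0 < 1 - y := by linarith
  have convex_pow := (convexOn_rpow_left hy0).2 (Set.mem_univ u) (Set.mem_univ v) ha hb hab
  simp only [smul_eq_mul] at convex_pow
  rw [← mul_div_assoc, ← mul_div_assoc, ← add_div]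
  gcongr
  linear_combination convex_pow + hab

lemma exponent_mean_le_half {n l s : ℝ} (hl : 0 ≤ l) (hns : n ≤ s) (hs : 0 < s) :
    l / s * (n - l) + (s - l) / s * l ≤ s / 2 := by
  rw [div_mul_eq_mul_div, div_mul_eq_mul_div, ← add_div, div_le_iff₀ hs]
  nlinarith [sq_nonneg (s - 2 * l), mul_nonneg hl (sub_nonneg.2 hns)]

theorem stmt9_general (n : ℕ) (x : ℝ) (hx : 0 ≤ x) (l : ℕ) (hl : 1 ≤ l) (hln : l ≤ n) :
    (l : ℝ) * harmonicR (n - l) + (((n : ℝ) + x) - (l : ℝ)) * harmonicR l ≤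
      ((n : ℝ) + x) * Hext (((n : ℝ) + x) / 2) := by
  set s : ℝ := n + x
  have hln' : (l : ℝ) ≤ n := by exact_mod_cast hln
  have hls : (l : ℝ) ≤ s := by linarith
  have hs : 0 < s := by linarith [show (1 : ℝ) ≤ l by exact_mod_cast hl]
  have hl0 : (0 : ℝ) ≤ l := l.cast_nonneg
  have hnl : (0 : ℝ) ≤ n - l := by linarith
  rw [← Hext_natCast, ← Hext_natCast, Nat.cast_sub hln]
  have hw₁ : 0 ≤ l / s := by positivity
  have hw₂ : 0 ≤ (s - l) / s := div_nonneg (by linarith) hs.le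
  have hw : l / s + (s - l) / s = 1 := by field_simp; ring
  calc (l : ℝ) * Hext (n - l) + (s - l) * Hext l
      = s * (l / s * Hext (n - l) + (s - l) / s * Hext l) := by field_simp
    _ ≤ s * Hext (l / s * (n - l) + (s - l) / s * l) := by
        gcongr
        exact concaveOn_Hext.2 hnl hl0 hw₁ hw₂ hw
    _ ≤ s * Hext (s / 2) := by
        gcongr
        exact monotoneOn_Hext ((convex_Ici 0) hnl hl0 hw₁ hw₂ hw) (Set.mem_Ici.2 (by positivity))
          (exponent_mean_le_half hl0 (by linarith) hs)

theorem stmt9 (n : ℕ) (hn : 2 ≤ n) (x : ℝ) (hx : 0 ≤ x) (l : ℕ) (hl : 1 ≤ l) (hln : l ≤ n) :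
    (l : ℝ) * harmonicR (n - l) + (((n : ℝ) + x) - (l : ℝ)) * harmonicR l ≤
      ((n : ℝ) + x) * Hext (((n : ℝ) + x) / 2) :=
  stmt9_general n x hx l hl hln
end
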